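/- arXiv:1810.09070 — 2 statements merged into one kernel-verified Lean document; each statement's English description precedes it below -/
import Mathlib

section
/- Fix ρ > 0 and ε ∈ [0,1). Let X take values in 𝒳 = {1,...,K} and Y in a countable set 𝒴, with joint law P_{XY}. There exists a guessing strategy G = ((σ_y, π_y))_{y∈𝒴} with error probability p_e(G|X,Y) ≤ ε whose expected cost satisfies C̄_ρ(G|X,Y) ≤ exp{ ρ · H_{1/(1+ρ)}^ε(X|Y) }. -/
/-!
The admissible sub-distributions `Q` (`0 ≤ Q ≤ P`, total mass at least `1 - ε`) form a compact set
in the product topology, on which `Q ↦ ∑_y ‖Q(·|y)‖_α` with `α = 1/(1+ρ)` is continuous; a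
minimiser `Q` therefore exists and its value is at most `exp(ρ H^ε_α(X|Y))`.

For each `y`, guess in order of decreasing `P(·|y)` and stop as soon as the mass `∑_x Q(x|y)` has
been collected, randomising only at the last guess. The success profile `a` is the top truncation
of the sorted `P(·|y)`; it crosses the sorted `Q(·|y)` once, so Karamata's inequality for the
concave `t ↦ t^α` gives `∑ a^α ≤ ∑ Q^α`, while Arikan's bound `(i+1) a_i^α ≤ ∑_j a_j^α` for a
decreasing profile gives `∑_i a_i (i+1)^ρ ≤ (∑_i a_i^α)^(1+ρ)`.
-/

/-- Conditional ε-smooth Rényi entropy, finite `𝒳`, countable `𝒴`. -/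
noncomputable def condSmoothRenyi {X Y : Type} [Fintype X] [Countable Y]
    (P : X → Y → ℝ) (α ε : ℝ) : ℝ :=
  sInf { h : ℝ | ∃ Q : X → Y → ℝ, (∀ x y, 0 ≤ Q x y ∧ Q x y ≤ P x y) ∧
    (1 - ε ≤ ∑' y, ∑ x, Q x y) ∧
    Summable (fun y => (∑ x, Q x y ^ α) ^ (1 / α)) ∧
    h = (α / (1 - α)) * Real.log (∑' y, (∑ x, Q x y ^ α) ^ (1 / α)) }

/-- `λ_y(i) = ∏_{j ≤ i} (1 - π_y(j))`. -/
noncomputable def lamG {K : ℕ} (π : Fin K → ℝ) (i : Fin K) : ℝ :=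
  ∏ j ∈ Finset.univ.filter (· ≤ i), (1 - π j)

open Finset

theorem ConcaveOn.slope_anti_of_le {D : Set ℝ} {f : ℝ → ℝ} (hf : ConcaveOn ℝ D f)
    {x y u v : ℝ} (hx : x ∈ D) (hy : y ∈ D) (hu : u ∈ D) (hv : v ∈ D)
    (hxy : x < y) (hyu : y ≤ u) (huv : u < v) :
    (f v - f u) / (v - u) ≤ (f y - f x) / (y - x) := by
  have hxu : x < u := hxy.trans_le hyu
  have h₂ := hf.neg.secant_mono hx hy hu hxy.ne' hxu.ne' hyu
  simp only [Pi.neg_apply, neg_sub_neg] at h₂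
  rw [← neg_sub (f y), ← neg_sub (f u), neg_div, neg_div, neg_le_neg_iff] at h₂
  exact (hf.slope_anti_adjacent hx hv hxu huv).trans h₂

theorem sum_eq_sum_filter_lt_add_sum_filter_gt {ι β : Type*} [DecidableEq ι] [LinearOrder β]
    (s : Finset ι) {a q : ι → β} {g : ι → ℝ} (hg : ∀ i ∈ s, a i = q i → g i = 0) :
    ∑ i ∈ s, g i = ∑ i ∈ s with q i < a i, g i + ∑ i ∈ s with a i < q i, g i := by
  rw [← sum_union (disjoint_filter.2 fun i _ h₁ h₂ => (h₁.trans h₂).false.elim)]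
  refine (sum_subset (fun i hi => ?_) fun i hi hiIJ => hg i hi ?_).symm
  · simp only [mem_union, mem_filter] at hi
    tauto
  · simp only [mem_union, mem_filter, not_or, not_and, not_lt] at hiIJ
    exact le_antisymm (hiIJ.1 hi) (hiIJ.2 hi)

/-- A single-crossing case of Karamata's inequality. -/
theorem ConcaveOn.sum_le_sum_of_crossing {ι : Type*} {D : Set ℝ} {f : ℝ → ℝ}
    (hf : ConcaveOn ℝ D f) (s : Finset ι) {a q : ι → ℝ} (ha : ∀ i ∈ s, a i ∈ D)
    (hq : ∀ i ∈ s, q i ∈ D) (hsum : ∑ i ∈ s, a i = ∑ i ∈ s, q i)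
    (hcross : ∀ i ∈ s, ∀ j ∈ s, q i < a i → a j < q j → q j ≤ q i) :
    ∑ i ∈ s, f (a i) ≤ ∑ i ∈ s, f (q i) := by
  classical
  set I := s.filter fun i => q i < a i
  set J := s.filter fun i => a i < q i
  have hmass : ∑ i ∈ I, (a i - q i) = ∑ j ∈ J, (q j - a j) := by
    have : ∑ i ∈ s, (a i - q i) = ∑ i ∈ I, (a i - q i) + ∑ j ∈ J, (a j - q j) :=
      sum_eq_sum_filter_lt_add_sum_filter_gt s fun i _ h => by simp [h]
    rw [sum_sub_distrib, hsum, sub_self] at this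
    have e : ∑ j ∈ J, (q j - a j) = -∑ j ∈ J, (a j - q j) := by
      rw [← sum_neg_distrib]; simp
    linarith
  have hpair : ∀ i ∈ I, ∀ j ∈ J,
      (f (a i) - f (q i)) * (q j - a j) ≤ (f (q j) - f (a j)) * (a i - q i) := by
    intro i hi j hj
    simp only [I, J, mem_filter] at hi hj
    have h := hf.slope_anti_of_le (ha j hj.1) (hq j hj.1) (hq i hi.1) (ha i hi.1) hj.2
      (hcross i hi.1 j hj.1 hi.2 hj.2) hi.2
    rwa [div_le_div_iff₀ (sub_pos.2 hi.2) (sub_pos.2 hj.2)] at h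
  have htotal : (∑ i ∈ I, (f (a i) - f (q i))) * ∑ i ∈ I, (a i - q i) ≤
      (∑ j ∈ J, (f (q j) - f (a j))) * ∑ i ∈ I, (a i - q i) := calc
    _ = ∑ i ∈ I, ∑ j ∈ J, (f (a i) - f (q i)) * (q j - a j) := by rw [hmass, sum_mul_sum]
    _ ≤ ∑ i ∈ I, ∑ j ∈ J, (f (q j) - f (a j)) * (a i - q i) :=
      sum_le_sum fun i hi => sum_le_sum fun j hj => hpair i hi j hj
    _ = _ := by rw [sum_comm, sum_mul_sum, sum_comm]
  have hdiff : ∑ i ∈ s, (f (a i) - f (q i)) =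
      ∑ i ∈ I, (f (a i) - f (q i)) + ∑ j ∈ J, (f (a j) - f (q j)) :=
    sum_eq_sum_filter_lt_add_sum_filter_gt s fun i _ h => by simp [h]
  have hJ : ∑ j ∈ J, (f (a j) - f (q j)) = -∑ j ∈ J, (f (q j) - f (a j)) := by
    rw [← sum_neg_distrib]; simp
  rw [sum_sub_distrib, hJ] at hdiff
  rcases (sum_nonneg fun i hi => (sub_pos.2 (mem_filter.1 hi).2).le :
      0 ≤ ∑ i ∈ I, (a i - q i)).eq_or_lt with hL | hL
  · have hI : I = ∅ := by
      by_contra h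
      exact (sum_pos (fun i hi => sub_pos.2 (mem_filter.1 hi).2)
        (nonempty_iff_ne_empty.2 h)).ne' hL.symm
    have hJ : J = ∅ := by
      by_contra h
      exact (sum_pos (fun i hi => sub_pos.2 (mem_filter.1 hi).2)
        (nonempty_iff_ne_empty.2 h)).ne' (hmass.symm.trans hL.symm)
    simp [hI, hJ] at hdiff
    linarith
  · linarith [le_of_mul_le_mul_right htotal hL]

section TopTrunc

variable {n : ℕ} (p : Fin n → ℝ) (s : ℝ)

noncomputable def prefixSum (m : ℕ) : ℝ := ∑ j ∈ univ.filter (fun j : Fin n => (j : ℕ) < m), p j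

noncomputable def topTrunc (i : Fin n) : ℝ := min (p i) (max (s - prefixSum p i) 0)

variable {p}

theorem prefixSum_zero : prefixSum p 0 = 0 := by simp [prefixSum]

theorem prefixSum_of_le {m : ℕ} (hm : n ≤ m) : prefixSum p m = ∑ j, p j := by
  rw [prefixSum, filter_true_of_mem fun j _ => j.2.trans_le hm]

theorem prefixSum_succ (i : Fin n) : prefixSum p (i + 1) = prefixSum p i + p i := by
  rw [prefixSum, prefixSum, ← sum_filter_add_sum_filter_not _ (fun j : Fin n => (j : ℕ) < i),
    filter_filter, filter_filter]
  congr 1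
  · congr 1; ext j; simp only [mem_filter, mem_univ, true_and]; omega
  · rw [show univ.filter (fun j : Fin n => (j : ℕ) < i + 1 ∧ ¬(j : ℕ) < i) = {i} by
      ext j; simp only [mem_filter, mem_univ, true_and, mem_singleton, Fin.ext_iff]; omega,
      sum_singleton]

theorem prefixSum_mono (hp : ∀ i, 0 ≤ p i) : Monotone (prefixSum p) := fun _ _ h =>
  sum_le_sum_of_subset_of_nonneg (monotone_filter_right _ fun _ _ hj => hj.trans_le h)
    fun j _ _ => hp j

theorem topTrunc_nonneg (hp : ∀ i, 0 ≤ p i) (i : Fin n) : 0 ≤ topTrunc p s i :=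
  le_min (hp i) (le_max_right _ _)

theorem topTrunc_le (i : Fin n) : topTrunc p s i ≤ p i := min_le_left _ _

theorem topTrunc_eq_sub (hp : ∀ i, 0 ≤ p i) (i : Fin n) :
    topTrunc p s i = min s (prefixSum p (i + 1)) - min s (prefixSum p i) := by
  rw [topTrunc, prefixSum_succ]
  have := hp i
  simp only [min_def, max_def]
  split_ifs <;> linarith

theorem sum_topTrunc (hp : ∀ i, 0 ≤ p i) (hs : 0 ≤ s) :
    ∑ i, topTrunc p s i = min s (∑ i, p i) := by
  simp_rw [topTrunc_eq_sub s hp]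
  rw [Fin.sum_univ_eq_sum_range (fun m => min s (prefixSum p (m + 1)) - min s (prefixSum p m)),
    sum_range_sub (fun m => min s (prefixSum p m)), prefixSum_of_le le_rfl, prefixSum_zero,
    min_eq_right hs, sub_zero]

theorem topTrunc_eq_of_lt (hp : ∀ i, 0 ≤ p i) {i j : Fin n} (hji : j < i)
    (hi : 0 < topTrunc p s i) : topTrunc p s j = p j := by
  have hmono := prefixSum_mono hp (Nat.succ_le_of_lt hji)
  rw [prefixSum_succ] at hmono
  have hpos : 0 < s - prefixSum p i := by
    by_contra! h
    rw [topTrunc, max_eq_right h, min_eq_right (hp i)] at hi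
    exact hi.false
  have := hp j
  rw [topTrunc, max_eq_left (by linarith), min_eq_left (by linarith)]

theorem topTrunc_antitone (hp : ∀ i, 0 ≤ p i) (hpa : Antitone p) : Antitone (topTrunc p s) :=
  fun _ _ hij => min_le_min (hpa hij)
    (max_le_max_right 0 (sub_le_sub_left (prefixSum_mono hp hij) s))

theorem sum_rpow_topTrunc_le {α : ℝ} (hα₀ : 0 ≤ α) (hα₁ : α ≤ 1) {q : Fin n → ℝ}
    (hq : ∀ i, 0 ≤ q i) (hqa : Antitone q) (hqp : ∀ i, q i ≤ p i) :
    ∑ i, topTrunc p (∑ j, q j) i ^ α ≤ ∑ i, q i ^ α := by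
  have hp i : 0 ≤ p i := (hq i).trans (hqp i)
  refine (Real.concaveOn_rpow hα₀ hα₁).sum_le_sum_of_crossing univ
    (fun i _ => topTrunc_nonneg _ hp i) (fun i _ => hq i) ?_ fun i _ j _ hi hj => hqa ?_
  · rw [sum_topTrunc _ hp (sum_nonneg fun i _ => hq i), min_eq_left (sum_le_sum fun i _ => hqp i)]
  · by_contra! hji
    linarith [topTrunc_eq_of_lt _ hp hji ((hq i).trans_lt hi), hqp j]

end TopTrunc

open Real in
theorem sum_mul_succ_rpow_le {n : ℕ} {ρ : ℝ} (hρ : 0 ≤ ρ) {a : Fin n → ℝ} (ha : ∀ i, 0 ≤ a i)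
    (haa : Antitone a) :
    ∑ i, a i * ((i : ℕ) + 1 : ℝ) ^ ρ ≤ (∑ i, a i ^ (1 / (1 + ρ))) ^ (1 + ρ) := by
  set α := 1 / (1 + ρ)
  set S := ∑ i, a i ^ α
  have hα : 0 ≤ α := by positivity
  have hS : 0 ≤ S := sum_nonneg fun i _ => rpow_nonneg (ha i) α
  have hrank (i : Fin n) : ((i : ℕ) + 1 : ℝ) * a i ^ α ≤ S := calc
    _ = ∑ _j ∈ Iic i, a i ^ α := by simp [Fin.card_Iic]
    _ ≤ ∑ j ∈ Iic i, a j ^ α :=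
      sum_le_sum fun j hj => rpow_le_rpow (ha i) (haa (mem_Iic.1 hj)) hα
    _ ≤ S := sum_le_sum_of_subset_of_nonneg (subset_univ _) fun j _ _ => rpow_nonneg (ha j) α
  have hterm (i : Fin n) : a i * ((i : ℕ) + 1 : ℝ) ^ ρ ≤ a i ^ α * S ^ ρ := by
    have hsplit : a i ^ α * (a i ^ α) ^ ρ = a i := by
      rw [← rpow_mul (ha i), ← rpow_add' (ha i) (by positivity),
        show α + α * ρ = 1 by simp only [α]; field_simp, rpow_one]
    calc a i * ((i : ℕ) + 1 : ℝ) ^ ρ = a i ^ α * (((i : ℕ) + 1 : ℝ) * a i ^ α) ^ ρ := by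
          rw [mul_rpow (by positivity) (rpow_nonneg (ha i) α)]
          linear_combination (-(((i : ℕ) + 1 : ℝ) ^ ρ)) * hsplit
      _ ≤ a i ^ α * S ^ ρ := mul_le_mul_of_nonneg_left
          (rpow_le_rpow (mul_nonneg (by positivity) (rpow_nonneg (ha i) α)) (hrank i) hρ)
          (rpow_nonneg (ha i) α)
  calc _ ≤ ∑ i, a i ^ α * S ^ ρ := sum_le_sum fun i _ => hterm i
    _ = S ^ (1 + ρ) := by rw [← sum_mul, rpow_add' hS (by positivity), rpow_one]

theorem exists_perm_antitone_comp {n : ℕ} {β : Type*} [LinearOrder β] (f : Fin n → β) :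
    ∃ τ : Equiv.Perm (Fin n), Antitone (f ∘ τ) :=
  ⟨Tuple.sort (OrderDual.toDual ∘ f), monotone_toDual_comp_iff.1 (Tuple.monotone_sort _)⟩

theorem apply_le_apply_of_antitone_comp {n : ℕ} {β : Type*} [LinearOrder β] {f g : Fin n → β}
    (hgf : ∀ x, g x ≤ f x) {σ τ : Equiv.Perm (Fin n)} (hf : Antitone (f ∘ τ))
    (hg : Antitone (g ∘ σ)) (i : Fin n) : g (σ i) ≤ f (τ i) := by
  classical
  refine (Tuple.lt_card_ge_iff_apply_ge_of_antitone (a := g (σ i)) hf).1 ?_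
  calc (i : ℕ) < #{j | g (σ i) ≤ g (σ j)} :=
        (Tuple.lt_card_ge_iff_apply_ge_of_antitone hg).2 le_rfl
    _ = #{x | g (σ i) ≤ g x} := card_equiv σ (by simp)
    _ ≤ #{x | g (σ i) ≤ f x} := card_le_card (monotone_filter_right _ fun x _ h => h.trans (hgf x))
    _ = #{j | g (σ i) ≤ f (τ j)} := (card_equiv τ (by simp)).symm

theorem lamG_nonneg {n : ℕ} {π : Fin n → ℝ} (hπ : ∀ i, π i ≤ 1) (i : Fin n) : 0 ≤ lamG π i :=
  prod_nonneg fun j _ => sub_nonneg.2 (hπ j)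

theorem lamG_one_sub {n : ℕ} {θ : Fin n → ℝ} (hθ : ∀ i j, j < i → θ i ≠ 0 → θ j = 1)
    (i : Fin n) : lamG (fun j => 1 - θ j) i = θ i := by
  simp only [lamG, sub_sub_cancel]
  by_cases hi : θ i = 0
  · rw [hi]
    exact prod_eq_zero (mem_filter.2 ⟨mem_univ i, le_rfl⟩) hi
  · exact prod_eq_single_of_mem i (mem_filter.2 ⟨mem_univ i, le_rfl⟩)
      fun j hj hji => hθ i j (lt_of_le_of_ne (mem_filter.1 hj).2 hji) hi

section KeepProb

variable {n : ℕ} (p : Fin n → ℝ) (s : ℝ)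

/-- The probability of not giving up at guess `i`; where `p i = 0` the junk value `0` of the
division is harmless, see `keepProb_mul`. -/
noncomputable def keepProb (i : Fin n) : ℝ := topTrunc p s i / p i

variable {p}

theorem keepProb_mul (hp : ∀ i, 0 ≤ p i) (i : Fin n) : keepProb p s i * p i = topTrunc p s i := by
  by_cases h : p i = 0
  · rw [h, mul_zero]
    exact (le_antisymm (h ▸ topTrunc_le s i) (topTrunc_nonneg s hp i)).symm
  · exact div_mul_cancel₀ _ h

theorem keepProb_mem_Icc (hp : ∀ i, 0 ≤ p i) (i : Fin n) : keepProb p s i ∈ Set.Icc 0 1 :=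
  ⟨div_nonneg (topTrunc_nonneg s hp i) (hp i), div_le_one_of_le₀ (topTrunc_le s i) (hp i)⟩

theorem keepProb_eq_one_of_lt (hp : ∀ i, 0 ≤ p i) (hpa : Antitone p) {i j : Fin n} (hji : j < i)
    (hi : keepProb p s i ≠ 0) : keepProb p s j = 1 := by
  obtain ⟨hti, hpi⟩ := div_ne_zero_iff.1 hi
  have hpj : 0 < p j := ((hp i).lt_of_ne' hpi).trans_le (hpa hji.le)
  rw [keepProb, topTrunc_eq_of_lt s hp hji ((topTrunc_nonneg s hp i).lt_of_ne' hti),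
    div_self hpj.ne']

end KeepProb

theorem exists_strategy_le {n : ℕ} {ρ : ℝ} (hρ : 0 ≤ ρ) {P Q : Fin n → ℝ} (hQ : ∀ x, 0 ≤ Q x)
    (hQP : ∀ x, Q x ≤ P x) :
    ∃ (σ : Equiv.Perm (Fin n)) (π : Fin n → ℝ), (∀ i, 0 ≤ π i ∧ π i ≤ 1) ∧
      ∑ x, lamG π (σ x) * P x = ∑ x, Q x ∧
      ∑ x, lamG π (σ x) * P x * (((σ x : ℕ) : ℝ) + 1) ^ ρ ≤
        (∑ x, Q x ^ (1 / (1 + ρ))) ^ (1 + ρ) := by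
  obtain ⟨τ, hτ⟩ := exists_perm_antitone_comp P
  obtain ⟨ς, hς⟩ := exists_perm_antitone_comp Q
  set p := P ∘ τ
  set s := ∑ x, Q x
  have hp i : 0 ≤ p i := (hQ _).trans (hQP _)
  have hqp : ∀ i, Q (ς i) ≤ p i := apply_le_apply_of_antitone_comp hQP hτ hς
  have hs : ∑ i, Q (ς i) = s := Equiv.sum_comp ς Q
  have hlam x : lamG (fun i => 1 - keepProb p s i) (τ.symm x) * P x = topTrunc p s (τ.symm x) := by
    rw [lamG_one_sub (fun _ _ => keepProb_eq_one_of_lt s hp hτ), ← keepProb_mul s hp]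
    simp [p]
  refine ⟨τ.symm, fun i => 1 - keepProb p s i, fun i => ?_, ?_, ?_⟩
  · have := keepProb_mem_Icc s hp i
    exact ⟨by linarith [this.2], by linarith [this.1]⟩
  · simp_rw [hlam]
    rw [Equiv.sum_comp τ.symm (topTrunc p s), sum_topTrunc s hp (sum_nonneg fun x _ => hQ x),
      min_eq_left (hs ▸ sum_le_sum fun i _ => hqp i)]
  · simp_rw [hlam]
    calc _ = ∑ i, topTrunc p s i * ((i : ℕ) + 1 : ℝ) ^ ρ :=
          Equiv.sum_comp τ.symm (fun i => topTrunc p s i * ((i : ℕ) + 1 : ℝ) ^ ρ)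
      _ ≤ (∑ i, topTrunc p s i ^ (1 / (1 + ρ))) ^ (1 + ρ) :=
          sum_mul_succ_rpow_le hρ (topTrunc_nonneg s hp) (topTrunc_antitone s hp hτ)
      _ ≤ (∑ i, Q (ς i) ^ (1 / (1 + ρ))) ^ (1 + ρ) := by
          refine Real.rpow_le_rpow
            (sum_nonneg fun i _ => Real.rpow_nonneg (topTrunc_nonneg s hp i) _) ?_ (by positivity)
          rw [← hs]
          exact sum_rpow_topTrunc_le (by positivity)
            (div_le_one_of_le₀ (by linarith) (by positivity)) (fun i => hQ _) hς hqp
      _ = _ := by rw [Equiv.sum_comp ς (fun x => Q x ^ (1 / (1 + ρ)))]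

section Smoothing

variable {X Y : Type*} [Fintype X]

def smoothingSet (P : X → Y → ℝ) (ε : ℝ) : Set (X → Y → ℝ) :=
  {Q | (∀ x y, 0 ≤ Q x y ∧ Q x y ≤ P x y) ∧ 1 - ε ≤ ∑' y, ∑ x, Q x y}

noncomputable def alphaNormSum (α : ℝ) (Q : X → Y → ℝ) : ℝ :=
  ∑' y, (∑ x, Q x y ^ α) ^ (1 / α)

theorem sum_rpow_rpow_le_card_mul {α : ℝ} (hα : 0 < α) {q p : X → ℝ} (hq : ∀ x, 0 ≤ q x)
    (hqp : ∀ x, q x ≤ p x) :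
    (∑ x, q x ^ α) ^ (1 / α) ≤ (Fintype.card X : ℝ) ^ (1 / α) * ∑ x, p x := by
  have hp x : 0 ≤ p x := (hq x).trans (hqp x)
  have hM : 0 ≤ ∑ x, p x := sum_nonneg fun x _ => hp x
  calc (∑ x, q x ^ α) ^ (1 / α) ≤ (Fintype.card X * (∑ x, p x) ^ α) ^ (1 / α) := by
        refine Real.rpow_le_rpow (sum_nonneg fun x _ => Real.rpow_nonneg (hq x) α) ?_
          (by positivity)
        rw [← nsmul_eq_mul, ← card_univ, ← sum_const]
        exact sum_le_sum fun x _ => Real.rpow_le_rpow (hq x)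
          ((hqp x).trans (single_le_sum (fun x _ => hp x) (mem_univ x))) hα.le
    _ = _ := by
        rw [Real.mul_rpow (by positivity) (Real.rpow_nonneg hM α), ← Real.rpow_mul hM,
          mul_one_div_cancel hα.ne', Real.rpow_one]

variable {P : X → Y → ℝ} {α : ℝ}

theorem summable_sum_rpow_rpow (hα : 0 < α) (hM : Summable fun y => ∑ x, P x y)
    {Q : X → Y → ℝ} (hQ : ∀ x y, 0 ≤ Q x y ∧ Q x y ≤ P x y) :
    Summable fun y => (∑ x, Q x y ^ α) ^ (1 / α) :=
  (hM.mul_left _).of_nonneg_of_le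
    (fun y => Real.rpow_nonneg (sum_nonneg fun x _ => Real.rpow_nonneg (hQ x y).1 α) _)
    fun y => sum_rpow_rpow_le_card_mul hα (fun x => (hQ x y).1) fun x => (hQ x y).2

theorem isCompact_smoothingSet (hM : Summable fun y => ∑ x, P x y) (ε : ℝ) :
    IsCompact (smoothingSet P ε) := by
  set box := Set.univ.pi fun x => Set.univ.pi fun y => Set.Icc 0 (P x y)
  have hbox : IsCompact box := isCompact_univ_pi fun x => isCompact_univ_pi fun y => isCompact_Icc
  have hmass : ContinuousOn (fun Q : X → Y → ℝ => ∑' y, ∑ x, Q x y) box := by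
    refine continuousOn_tsum (fun y => (continuous_finsetSum _ fun x _ =>
      (continuous_apply y).comp (continuous_apply x)).continuousOn) hM fun y Q hQ => ?_
    simp only [box, Set.mem_pi, Set.mem_univ, true_implies, Set.mem_Icc] at hQ
    rw [Real.norm_of_nonneg (sum_nonneg fun x _ => (hQ x y).1)]
    exact sum_le_sum fun x _ => (hQ x y).2
  have hset : smoothingSet P ε = box ∩ (fun Q => ∑' y, ∑ x, Q x y) ⁻¹' Set.Ici (1 - ε) := by
    ext Q
    simp only [smoothingSet, box, Set.mem_inter_iff, Set.mem_pi, Set.mem_univ, true_implies,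
      Set.mem_Icc, Set.mem_preimage, Set.mem_Ici, Set.mem_ofPred_eq]
  rw [hset]
  exact hbox.of_isClosed_subset (hmass.preimage_isClosed_of_isClosed hbox.isClosed isClosed_Ici)
    Set.inter_subset_left

theorem continuousOn_alphaNormSum (hα : 0 < α) (hM : Summable fun y => ∑ x, P x y) (ε : ℝ) :
    ContinuousOn (alphaNormSum α) (smoothingSet P ε) := by
  refine continuousOn_tsum (fun y => Continuous.continuousOn ?_)
    (hM.mul_left ((Fintype.card X : ℝ) ^ (1 / α))) fun y Q hQ => ?_
  · exact (continuous_finsetSum _ fun x _ => ((continuous_apply y).comp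
      (continuous_apply x)).rpow_const fun _ => Or.inr hα.le).rpow_const
      fun _ => Or.inr (by positivity)
  · rw [Real.norm_of_nonneg (Real.rpow_nonneg (sum_nonneg fun x _ =>
      Real.rpow_nonneg (hQ.1 x y).1 α) _)]
    exact sum_rpow_rpow_le_card_mul hα (fun x => (hQ.1 x y).1) fun x => (hQ.1 x y).2

end Smoothing

open Real in
theorem le_exp_mul_condSmoothRenyi {X Y : Type} [Fintype X] [Countable Y] {P : X → Y → ℝ}
    {ρ ε c : ℝ} (hρ : 0 < ρ) (hc : ∀ Q ∈ smoothingSet P ε, c ≤ alphaNormSum (1 / (1 + ρ)) Q)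
    (hne : ∃ Q ∈ smoothingSet P ε,
      Summable fun y => (∑ x, Q x y ^ (1 / (1 + ρ))) ^ (1 / (1 / (1 + ρ)))) :
    c ≤ exp (ρ * condSmoothRenyi P (1 / (1 + ρ)) ε) := by
  have hcoef : ρ * (1 / (1 + ρ) / (1 - 1 / (1 + ρ))) = 1 := by
    field_simp
    rw [add_sub_cancel_left, div_self hρ.ne']
  obtain ⟨Q₀, hQ₀, hsum⟩ := hne
  rcases le_or_gt c 0 with hc0 | hc0
  · exact hc0.trans (exp_pos _).le
  rw [← exp_log hc0, exp_le_exp, ← div_le_iff₀' hρ]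
  refine le_csInf ⟨_, Q₀, hQ₀.1, hQ₀.2, hsum, rfl⟩ ?_
  rintro _ ⟨Q, hQ, hmass, -, rfl⟩
  rw [div_le_iff₀' hρ, ← mul_assoc, hcoef, one_mul]
  exact log_le_log hc0 (hc Q ⟨hQ, hmass⟩)

theorem guessing_achievability_general {Y : Type} [Countable Y] (K : ℕ)
    (P : Fin K → Y → ℝ) (hP0 : ∀ x y, 0 ≤ P x y) (hP1 : ∑' y, ∑ x, P x y = 1)
    (ρ : ℝ) (hρ : 0 < ρ) (ε : ℝ) (hε : ε ∈ Set.Ico (0:ℝ) 1) :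
    ∃ (σ : Y → Equiv.Perm (Fin K)) (π : Y → Fin K → ℝ),
      (∀ y i, 0 ≤ π y i ∧ π y i ≤ 1) ∧
      1 - ∑' y, ∑ x, lamG (π y) (σ y x) * P x y ≤ ε ∧
      ∑' y, ∑ x, lamG (π y) (σ y x) * P x y * (((σ y x : ℕ) : ℝ) + 1) ^ ρ ≤
        Real.exp (ρ * condSmoothRenyi P (1 / (1 + ρ)) ε) := by
  have hα : 0 < 1 / (1 + ρ) := by positivity
  have hM : Summable fun y => ∑ x, P x y := by
    by_contra h
    simp [tsum_eq_zero_of_not_summable h] at hP1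
  have hPmem : P ∈ smoothingSet P ε := ⟨fun x y => ⟨hP0 x y, le_rfl⟩, by linarith [hε.1]⟩
  obtain ⟨Q, hQ, hmin⟩ := (isCompact_smoothingSet hM ε).exists_isMinOn ⟨P, hPmem⟩
    (continuousOn_alphaNormSum hα hM ε)
  choose σ π hπ hmass hcost using fun y =>
    exists_strategy_le hρ.le (fun x => (hQ.1 x y).1) fun x => (hQ.1 x y).2
  refine ⟨σ, π, hπ, by simp_rw [hmass]; linarith [hQ.2], ?_⟩
  have hcost_nonneg y : 0 ≤ ∑ x, lamG (π y) (σ y x) * P x y * (((σ y x : ℕ) : ℝ) + 1) ^ ρ :=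
    sum_nonneg fun x _ => mul_nonneg (mul_nonneg (lamG_nonneg (fun i => (hπ y i).2) _) (hP0 x y))
      (by positivity)
  have hQsum := summable_sum_rpow_rpow hα hM hQ.1
  simp only [one_div_one_div] at hQsum
  calc _ ≤ alphaNormSum (1 / (1 + ρ)) Q := by
        rw [alphaNormSum, one_div_one_div]
        exact Summable.tsum_le_tsum hcost (hQsum.of_nonneg_of_le hcost_nonneg hcost) hQsum
    _ ≤ _ := le_exp_mul_condSmoothRenyi hρ (fun Q' hQ' => hmin hQ')
        ⟨P, hPmem, summable_sum_rpow_rpow hα hM hPmem.1⟩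

/-- Achievability for guessing allowing errors: there is a strategy with error
probability at most `ε` and expected cost at most `exp(ρ H_{1/(1+ρ)}^ε(X|Y))`. -/
theorem guessing_achievability {Y : Type} [Countable Y] (K : ℕ) (hK : 0 < K)
    (P : Fin K → Y → ℝ) (hP0 : ∀ x y, 0 ≤ P x y) (hP1 : ∑' y, ∑ x, P x y = 1)
    (ρ : ℝ) (hρ : 0 < ρ) (ε : ℝ) (hε : ε ∈ Set.Ico (0:ℝ) 1) :
    ∃ (σ : Y → Equiv.Perm (Fin K)) (π : Y → Fin K → ℝ),
      (∀ y i, 0 ≤ π y i ∧ π y i ≤ 1) ∧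
      1 - ∑' y, ∑ x, lamG (π y) (σ y x) * P x y ≤ ε ∧
      ∑' y, ∑ x, lamG (π y) (σ y x) * P x y * (((σ y x : ℕ) : ℝ) + 1) ^ ρ ≤
        Real.exp (ρ * condSmoothRenyi P (1 / (1 + ρ)) ε) :=
  guessing_achievability_general K P hP0 hP1 ρ hρ ε hε
end

section
/- Let (𝐗, 𝐘) be a mixture of m i.i.d. sources: P_{X^n Y^n} = ∑_{i=1}^m α_i ∏_{t=1}^n P_{X_i Y_i}, with α_i > 0, ∑ α_i = 1, and H(X_1|Y_1) > H(X_2|Y_2) > ⋯ > H(X_m|Y_m), where H(X_i|Y_i) is the conditional Shannon entropy of component i. Set A_i = ∑_{j<i} α_j and A_{m+1} = 1. Fix α ∈ (0,1), an index i, and ε ∈ [A_i, A_{i+1}). Then H_α^ε(𝐗|𝐘) := lim_{δ↓0} limsup_{n→∞} (1/n) H_α^{ε+δ}(X^n|Y^n) = H(X_i|Y_i). -/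
/-!
Write `H_k` for the conditional entropy of the `k`-th source and fix `γ > 0`. By Chebyshev's
inequality a sample of the `k`-th i.i.d. source is typical with high probability: its conditional
likelihood `∏ₜ P_k(xₜ|yₜ)` lies between `exp(-n(H_k + γ))` and `exp(-n(H_k - γ))`.

Upper bound: smooth the mixture by restricting it to the pairs that are typical for some
component `k ≥ i`. Since `H_k ≤ H_i` for these, the discarded mass tends to `A_i < ε`, and every
`y`-fibre of the retained set has at most `m · exp(n(H_i + γ))` points, so the power-mean
inequality bounds the Rényi sum.

Lower bound: let `D` be the set where the conditional likelihood of the mixture is at most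
`θ = exp(-n(H_i - γ))`. A fibre of the complement of `D` has at most `θ⁻¹` points, so the
components `k ≤ i`, whose typical pairs have likelihood at most `exp(-n(H_i - γ/2))`, put almost
all their mass on `D`. Hence `D` carries mass close to `A_{i+1} > ε` and every smoothing keeps
a fixed mass `μ > 0` of it. On `D` we have `Q^α ≥ (θ P_Y)^(α-1) Q`, and Jensen's inequality over
`y` gives `H_α^ε ≥ n(H_i - γ) + log μ / (1 - α)`.

Both bounds hold for every `ε' ∈ (A_i, A_{i+1})`, in particular for `ε + δ` with small `δ > 0`.
-/

open Filter

/-- Conditional ε-smooth Rényi entropy for finite alphabets. -/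
noncomputable def condSmoothRenyiF {X Y : Type} [Fintype X] [Fintype Y]
    (P : X → Y → ℝ) (α ε : ℝ) : ℝ :=
  sInf { h : ℝ | ∃ Q : X → Y → ℝ, (∀ x y, 0 ≤ Q x y ∧ Q x y ≤ P x y) ∧
    (1 - ε ≤ ∑ x, ∑ y, Q x y) ∧
    h = (α / (1 - α)) * Real.log (∑ y, (∑ x, Q x y ^ α) ^ (1 / α)) }

/-- Conditional Shannon entropy `H(X|Y)` (natural log; `0 log 0 = 0`). -/
noncomputable def condShannon {X Y : Type} [Fintype X] [Fintype Y]
    (P : X → Y → ℝ) : ℝ :=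
  ∑ y, ∑ x, P x y * Real.log ((∑ x', P x' y) / P x y)

open Finset Real

section Inequalities

variable {ι : Type*}

lemma rpow_sum_le_sum_rpow (s : Finset ι) {f : ι → ℝ} (hf : ∀ i ∈ s, 0 ≤ f i) {p : ℝ}
    (hp0 : 0 < p) (hp1 : p ≤ 1) : (∑ i ∈ s, f i) ^ p ≤ ∑ i ∈ s, f i ^ p := by
  classical
  induction s using Finset.induction_on with
  | empty => simp [zero_rpow hp0.ne']
  | insert j s hj ih =>
    rw [sum_insert hj, sum_insert hj]
    have hs := fun i hi => hf i (mem_insert_of_mem hi)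
    calc (f j + ∑ i ∈ s, f i) ^ p ≤ f j ^ p + (∑ i ∈ s, f i) ^ p :=
          rpow_add_le_add_rpow (hf j (mem_insert_self j s)) (sum_nonneg hs) hp0.le hp1
      _ ≤ f j ^ p + ∑ i ∈ s, f i ^ p := by gcongr; exact ih hs

lemma sum_le_rpow_sum_rpow (s : Finset ι) {f : ι → ℝ} (hf : ∀ i ∈ s, 0 ≤ f i) {α : ℝ}
    (hα0 : 0 < α) (hα1 : α ≤ 1) : ∑ i ∈ s, f i ≤ (∑ i ∈ s, f i ^ α) ^ (1 / α) := by
  calc ∑ i ∈ s, f i = ((∑ i ∈ s, f i) ^ α) ^ (1 / α) := by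
        rw [← rpow_mul (sum_nonneg hf), mul_one_div_cancel hα0.ne', rpow_one]
    _ ≤ (∑ i ∈ s, f i ^ α) ^ (1 / α) := by
        gcongr
        · exact rpow_nonneg (sum_nonneg hf) α
        · exact rpow_sum_le_sum_rpow s hf hα0 hα1

lemma rpow_sum_rpow_le_card_rpow_mul_sum (s : Finset ι) {f : ι → ℝ} (hf : ∀ i ∈ s, 0 ≤ f i)
    {α : ℝ} (hα0 : 0 < α) (hα1 : α ≤ 1) :
    (∑ i ∈ s, f i ^ α) ^ (1 / α) ≤ (#s : ℝ) ^ (1 / α - 1) * ∑ i ∈ s, f i := by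
  have h := rpow_sum_le_const_mul_sum_rpow_of_nonneg s (f := fun i => f i ^ α)
    (one_le_one_div hα0 hα1) (fun i hi => rpow_nonneg (hf i hi) α)
  refine h.trans_eq ?_
  congr 1
  refine sum_congr rfl fun i hi => ?_
  rw [← rpow_mul (hf i hi), mul_one_div_cancel hα0.ne', rpow_one]

/-- Jensen's inequality for `t ↦ t ^ p` with weights `w`, applied to the ratios `μ i / w i`. -/
lemma rpow_sum_le_sum_rpow_mul_rpow [Fintype ι] {w μ : ι → ℝ} (hμ0 : ∀ i, 0 ≤ μ i)
    (hμw : ∀ i, μ i ≤ w i) (hw1 : ∑ i, w i = 1) {p : ℝ} (hp : 1 ≤ p) :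
    (∑ i, μ i) ^ p ≤ ∑ i, w i ^ (1 - p) * μ i ^ p := by
  have hw0 : ∀ i, 0 ≤ w i := fun i => (hμ0 i).trans (hμw i)
  have hμ_of_w : ∀ i, w i = 0 → μ i = 0 := fun i h => le_antisymm (h ▸ hμw i) (hμ0 i)
  have hmean : ∑ i, w i * (μ i / w i) = ∑ i, μ i := sum_congr rfl fun i _ => by
    rcases (hw0 i).eq_or_lt with h | h
    · simp [← h, hμ_of_w i h.symm]
    · field_simp
  have hpow : ∀ i, w i * (μ i / w i) ^ p = w i ^ (1 - p) * μ i ^ p := fun i => by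
    rcases (hw0 i).eq_or_lt with h | h
    · simp [← h, hμ_of_w i h.symm, zero_rpow (by linarith : p ≠ 0)]
    · rw [div_rpow (hμ0 i) h.le, rpow_sub h, rpow_one]
      field_simp
  calc (∑ i, μ i) ^ p = (∑ i, w i * (μ i / w i)) ^ p := by rw [hmean]
    _ ≤ ∑ i, w i * (μ i / w i) ^ p := rpow_arith_mean_le_arith_mean_rpow univ w _
          (fun i _ => hw0 i) hw1 (fun i _ => div_nonneg (hμ0 i) (hw0 i)) hp
    _ = ∑ i, w i ^ (1 - p) * μ i ^ p := sum_congr rfl fun i _ => hpow i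

lemma rpow_sub_one_mul_sum_le_sum_rpow (s : Finset ι) {f : ι → ℝ} {c : ℝ}
    (hf : ∀ i ∈ s, 0 ≤ f i ∧ f i ≤ c) {α : ℝ} (hα1 : α ≤ 1) :
    c ^ (α - 1) * ∑ i ∈ s, f i ≤ ∑ i ∈ s, f i ^ α := by
  rw [mul_sum]
  refine sum_le_sum fun i hi => ?_
  obtain ⟨h0, hc⟩ := hf i hi
  rcases h0.eq_or_lt with h | h
  · rw [← h, mul_zero]; exact rpow_nonneg le_rfl α
  · calc c ^ (α - 1) * f i ≤ f i ^ (α - 1) * f i :=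
          mul_le_mul_of_nonneg_right (rpow_le_rpow_of_nonpos h hc (by linarith)) h.le
      _ = f i ^ α := by rw [← rpow_add_one h.ne', sub_add_cancel]

lemma card_filter_le_inv (s : Finset ι) {f : ι → ℝ} (hf0 : ∀ i ∈ s, 0 ≤ f i)
    (hf1 : ∑ i ∈ s, f i ≤ 1) {θ : ℝ} (hθ : 0 < θ) [DecidablePred (θ ≤ f ·)] :
    (#{i ∈ s | θ ≤ f i} : ℝ) ≤ θ⁻¹ := by
  rw [← one_div, le_div_iff₀ hθ, ← nsmul_eq_mul]
  calc #{i ∈ s | θ ≤ f i} • θ ≤ ∑ i ∈ s with θ ≤ f i, f i :=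
        card_nsmul_le_sum _ f θ fun i hi => (mem_filter.1 hi).2
    _ ≤ ∑ i ∈ s, f i := sum_le_sum_of_subset_of_nonneg (filter_subset _ _)
          fun i hi _ => hf0 i hi
    _ ≤ 1 := hf1

end Inequalities

lemma tendsto_inv_mul_of_bounds {f : ℕ → ℝ} {c : ℝ}
    (hup : ∀ γ > 0, ∃ K, ∀ᶠ n in atTop, f n ≤ n * (c + γ) + K)
    (hlow : ∀ γ > 0, ∃ K, ∀ᶠ n in atTop, n * (c - γ) + K ≤ f n) :
    Tendsto (fun n : ℕ => 1 / (n : ℝ) * f n) atTop (nhds c) := by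
  rw [tendsto_order]
  constructor
  · intro b hb
    obtain ⟨K, hK⟩ := hlow ((c - b) / 2) (by linarith)
    have hsmall := (tendsto_const_div_atTop_nhds_zero_nat K).eventually
      (lt_mem_nhds (by linarith : -((c - b) / 2) < 0))
    filter_upwards [hK, hsmall, eventually_gt_atTop 0] with n hn hKn hpos
    have hpos : (0 : ℝ) < n := Nat.cast_pos.2 hpos
    rw [lt_div_iff₀ hpos] at hKn
    rw [one_div, ← div_eq_inv_mul, lt_div_iff₀ hpos]
    nlinarith
  · intro b hb
    obtain ⟨K, hK⟩ := hup ((b - c) / 2) (by linarith)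
    have hsmall := (tendsto_const_div_atTop_nhds_zero_nat K).eventually
      (gt_mem_nhds (by linarith : (0 : ℝ) < (b - c) / 2))
    filter_upwards [hK, hsmall, eventually_gt_atTop 0] with n hn hKn hpos
    have hpos : (0 : ℝ) < n := Nat.cast_pos.2 hpos
    rw [div_lt_iff₀ hpos] at hKn
    rw [one_div, ← div_eq_inv_mul, div_lt_iff₀ hpos]
    nlinarith

section CondProb

variable {X Y : Type} [Fintype X]

noncomputable def condProb (p : X → Y → ℝ) (x : X) (y : Y) : ℝ :=
  p x y / ∑ x', p x' y

lemma condProb_nonneg {p : X → Y → ℝ} (hp : ∀ x y, 0 ≤ p x y) (x : X) (y : Y) :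
    0 ≤ condProb p x y :=
  div_nonneg (hp x y) (sum_nonneg fun x' _ => hp x' y)

lemma sum_condProb_le_one (p : X → Y → ℝ) (y : Y) :
    ∑ x, condProb p x y ≤ 1 := by
  simp only [condProb, ← sum_div]
  exact div_self_le_one _

lemma condProb_mul_sum {p : X → Y → ℝ} (hp : ∀ x y, 0 ≤ p x y) (x : X) (y : Y) :
    condProb p x y * ∑ x', p x' y = p x y := by
  rcases (sum_nonneg fun x' _ => hp x' y).eq_or_lt with h | h
  · rw [← h, mul_zero]
    exact (le_antisymm (h ▸ single_le_sum (fun x' _ => hp x' y) (mem_univ x)) (hp x y)).symm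
  · exact div_mul_cancel₀ _ h.ne'

end CondProb

section SmoothRenyi

variable {X Y : Type} [Fintype X] [Fintype Y]

noncomputable def condRenyiSum (α : ℝ) (Q : X → Y → ℝ) : ℝ :=
  ∑ y, (∑ x, Q x y ^ α) ^ (1 / α)

open Classical in
noncomputable def massOn (w : X → Y → ℝ) (C : X → Y → Prop) : ℝ :=
  ∑ x, ∑ y, if C x y then w x y else 0

lemma massOn_nonneg {w : X → Y → ℝ} (hw : ∀ x y, 0 ≤ w x y) (C : X → Y → Prop) :
    0 ≤ massOn w C := by
  classical
  exact sum_nonneg fun x _ => sum_nonneg fun y _ => by split_ifs <;> simp [hw]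

lemma massOn_mono {w : X → Y → ℝ} (hw : ∀ x y, 0 ≤ w x y) {C C' : X → Y → Prop}
    (h : ∀ x y, C x y → C' x y) : massOn w C ≤ massOn w C' := by
  classical
  refine sum_le_sum fun x _ => sum_le_sum fun y _ => ?_
  by_cases hC : C x y
  · simp [hC, h x y hC]
  · by_cases hC' : C' x y <;> simp [hC, hC', hw]

lemma massOn_le_massOn_of_le {v w : X → Y → ℝ} (hv : ∀ x y, v x y ≤ w x y)
    (C : X → Y → Prop) : massOn v C ≤ massOn w C := by
  classical
  exact sum_le_sum fun x _ => sum_le_sum fun y _ => by split_ifs <;> simp [hv]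

lemma massOn_add_massOn_not (w : X → Y → ℝ) (C : X → Y → Prop) :
    massOn w C + massOn w (fun x y => ¬ C x y) = ∑ x, ∑ y, w x y := by
  classical
  simp only [massOn, ← sum_add_distrib]
  exact sum_congr rfl fun x _ => sum_congr rfl fun y _ => by by_cases h : C x y <;> simp [h]

lemma massOn_le_add {w : X → Y → ℝ} (hw : ∀ x y, 0 ≤ w x y) {C C₁ C₂ : X → Y → Prop}
    (h : ∀ x y, C x y → C₁ x y ∨ C₂ x y) : massOn w C ≤ massOn w C₁ + massOn w C₂ := by
  classical
  simp only [massOn, ← sum_add_distrib]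
  refine sum_le_sum fun x _ => sum_le_sum fun y _ => ?_
  by_cases hC : C x y
  · rcases h x y hC with h₁ | h₂
    · by_cases h₂ : C₂ x y <;> simp [hC, h₁, h₂, hw]
    · by_cases h₁ : C₁ x y <;> simp [hC, h₁, h₂, hw]
  · by_cases h₁ : C₁ x y <;> by_cases h₂ : C₂ x y <;> simp [hC, h₁, h₂, hw]

lemma massOn_le_sum_mul_div {w f : X → Y → ℝ} (hw : ∀ x y, 0 ≤ w x y)
    (hf : ∀ x y, 0 ≤ f x y) {C : X → Y → Prop} {c : ℝ} (hc : 0 < c)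
    (h : ∀ x y, 0 < w x y → C x y → c ≤ f x y) :
    massOn w C ≤ (∑ x, ∑ y, w x y * f x y) / c := by
  classical
  simp only [massOn, sum_div]
  refine sum_le_sum fun x _ => sum_le_sum fun y _ => ?_
  rw [le_div_iff₀ hc]
  by_cases hC : C x y
  · rw [if_pos hC]
    rcases (hw x y).eq_or_lt with h0 | hpos
    · simp [← h0]
    · exact mul_le_mul_of_nonneg_left (h x y hpos hC) (hw x y)
  · rw [if_neg hC, zero_mul]
    exact mul_nonneg (hw x y) (hf x y)

lemma sum_sum_le_condRenyiSum {Q : X → Y → ℝ} (hQ : ∀ x y, 0 ≤ Q x y) {α : ℝ}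
    (hα0 : 0 < α) (hα1 : α ≤ 1) : ∑ x, ∑ y, Q x y ≤ condRenyiSum α Q := by
  rw [sum_comm]
  exact sum_le_sum fun y _ => sum_le_rpow_sum_rpow _ (fun x _ => hQ x y) hα0 hα1

variable {P : X → Y → ℝ} {α ε : ℝ}

lemma condSmoothRenyiF_le (hα : α ∈ Set.Ioo (0 : ℝ) 1) (hε : ε < 1) {Q : X → Y → ℝ}
    (hQ : ∀ x y, 0 ≤ Q x y ∧ Q x y ≤ P x y) (hmass : 1 - ε ≤ ∑ x, ∑ y, Q x y) :
    condSmoothRenyiF P α ε ≤ α / (1 - α) * log (condRenyiSum α Q) := by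
  refine csInf_le ⟨α / (1 - α) * log (1 - ε), ?_⟩ ⟨Q, hQ, hmass, rfl⟩
  rintro _ ⟨Q', hQ', hmass', rfl⟩
  have hc : 0 ≤ α / (1 - α) := div_nonneg hα.1.le (sub_nonneg.2 hα.2.le)
  refine mul_le_mul_of_nonneg_left (log_le_log (by linarith) ?_) hc
  exact hmass'.trans (sum_sum_le_condRenyiSum (fun x y => (hQ' x y).1) hα.1 hα.2.le)

lemma le_condSmoothRenyiF (hP : ∀ x y, 0 ≤ P x y) (hPmass : 1 - ε ≤ ∑ x, ∑ y, P x y) {c : ℝ}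
    (h : ∀ Q : X → Y → ℝ, (∀ x y, 0 ≤ Q x y ∧ Q x y ≤ P x y) → 1 - ε ≤ ∑ x, ∑ y, Q x y →
      c ≤ α / (1 - α) * log (condRenyiSum α Q)) :
    c ≤ condSmoothRenyiF P α ε := by
  refine le_csInf ⟨_, P, fun x y => ⟨hP x y, le_rfl⟩, hPmass, rfl⟩ ?_
  rintro _ ⟨Q, hQ, hmass, rfl⟩
  exact h Q hQ hmass

end SmoothRenyi

section SmoothRenyiBounds

variable {X Y : Type} [Fintype X] [Fintype Y] {P : X → Y → ℝ} {α ε : ℝ}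

theorem condSmoothRenyiF_le_log (hα : α ∈ Set.Ioo (0 : ℝ) 1) (hε : ε < 1)
    (hP : ∀ x y, 0 ≤ P x y) (hP1 : ∑ x, ∑ y, P x y ≤ 1) {S : X → Y → Prop}
    [∀ x y, Decidable (S x y)] (hS : 1 - ε ≤ massOn P S) {M : ℝ} (hM : 0 < M)
    (hcard : ∀ y, (#{x | S x y} : ℝ) ≤ M) :
    condSmoothRenyiF P α ε ≤ log M := by
  obtain ⟨hα0, hα1⟩ := hα
  set Q : X → Y → ℝ := fun x y => if S x y then P x y else 0
  have hQ : ∀ x y, 0 ≤ Q x y ∧ Q x y ≤ P x y := fun x y => by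
    by_cases h : S x y <;> simp [Q, h, hP]
  have hQmass : 1 - ε ≤ ∑ x, ∑ y, Q x y := by
    convert hS using 1
    simp only [Q, massOn]
    congr!
  have hexp : 0 ≤ 1 / α - 1 := by rw [sub_nonneg]; exact one_le_one_div hα0 hα1.le
  have hfiber : ∀ y, (∑ x, Q x y ^ α) ^ (1 / α) ≤ M ^ (1 / α - 1) * ∑ x, Q x y := fun y => by
    have hpow : ∑ x, Q x y ^ α = ∑ x with S x y, P x y ^ α := by
      rw [sum_filter]
      exact sum_congr rfl fun x _ => by by_cases h : S x y <;> simp [Q, h, zero_rpow hα0.ne']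
    have hsum : ∑ x, Q x y = ∑ x with S x y, P x y := (sum_filter _ _).symm
    rw [hpow, hsum]
    refine (rpow_sum_rpow_le_card_rpow_mul_sum _ (fun x _ => hP x y) hα0 hα1.le).trans ?_
    gcongr
    · exact sum_nonneg fun x _ => hP x y
    · exact hcard y
  have hupper : condRenyiSum α Q ≤ M ^ (1 / α - 1) := by
    calc condRenyiSum α Q ≤ ∑ y, M ^ (1 / α - 1) * ∑ x, Q x y := sum_le_sum fun y _ => hfiber y
      _ = M ^ (1 / α - 1) * ∑ x, ∑ y, Q x y := by rw [← mul_sum, sum_comm]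
      _ ≤ M ^ (1 / α - 1) * 1 := by
          gcongr
          exact (sum_le_sum fun x _ => sum_le_sum fun y _ => (hQ x y).2).trans hP1
      _ = M ^ (1 / α - 1) := mul_one _
  have hpos : 0 < condRenyiSum α Q := (sub_pos.2 hε).trans_le <|
    hQmass.trans (sum_sum_le_condRenyiSum (fun x y => (hQ x y).1) hα0 hα1.le)
  calc condSmoothRenyiF P α ε ≤ α / (1 - α) * log (condRenyiSum α Q) :=
        condSmoothRenyiF_le ⟨hα0, hα1⟩ hε hQ hQmass
    _ ≤ α / (1 - α) * log (M ^ (1 / α - 1)) := by gcongr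
    _ = log M := by
        rw [log_rpow hM]
        field_simp

theorem le_condSmoothRenyiF_of_massOn (hα : α ∈ Set.Ioo (0 : ℝ) 1) (hε : 0 ≤ ε)
    (hP : ∀ x y, 0 ≤ P x y) (hP1 : ∑ x, ∑ y, P x y = 1) {θ μ : ℝ} (hθ : 0 < θ) (hμ : 0 < μ)
    (hD : ε + μ ≤ massOn P (fun x y => condProb P x y ≤ θ)) :
    -log θ + log μ / (1 - α) ≤ condSmoothRenyiF P α ε := by
  obtain ⟨hα0, hα1⟩ := hα
  refine le_condSmoothRenyiF hP (by linarith) fun Q hQ hmass => ?_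
  set D : X → Y → Prop := fun x y => condProb P x y ≤ θ
  set PY : Y → ℝ := fun y => ∑ x, P x y
  set μy : Y → ℝ := fun y => ∑ x with D x y, Q x y
  have hμy : ∀ y, 0 ≤ μy y ∧ μy y ≤ PY y := fun y =>
    ⟨sum_nonneg fun x _ => (hQ x y).1, (sum_le_sum fun x _ => (hQ x y).2).trans
      (sum_le_sum_of_subset_of_nonneg (filter_subset _ _) fun x _ _ => hP x y)⟩
  have hμ_le : μ ≤ ∑ y, μy y := by
    have hQD : ∑ y, μy y = massOn Q D := by
      simp only [μy, sum_filter]; exact sum_comm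
    have hQ₁ := massOn_add_massOn_not Q D
    have hP₁ := massOn_add_massOn_not P D
    have hnot := massOn_le_massOn_of_le (fun x y => (hQ x y).2) (fun x y => ¬ D x y)
    linarith
  have hfiber : ∀ y, θ ^ (1 - 1 / α) * (PY y ^ (1 - 1 / α) * μy y ^ (1 / α)) ≤
      (∑ x, Q x y ^ α) ^ (1 / α) := fun y => by
    have hθPY : 0 ≤ θ * PY y := mul_nonneg hθ.le (sum_nonneg fun x _ => hP x y)
    have hQθ : ∀ x ∈ ({x | D x y} : Finset X), 0 ≤ Q x y ∧ Q x y ≤ θ * PY y := fun x hx =>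
      ⟨(hQ x y).1, (hQ x y).2.trans <| by
        rw [← condProb_mul_sum hP x y]
        exact mul_le_mul_of_nonneg_right (mem_filter.1 hx).2 (sum_nonneg fun x _ => hP x y)⟩
    have hpow : (θ * PY y) ^ (α - 1) * μy y ≤ ∑ x, Q x y ^ α :=
      (rpow_sub_one_mul_sum_le_sum_rpow _ hQθ hα1.le).trans <|
        sum_le_sum_of_subset_of_nonneg (filter_subset _ _) fun x _ _ => rpow_nonneg (hQ x y).1 α
    calc θ ^ (1 - 1 / α) * (PY y ^ (1 - 1 / α) * μy y ^ (1 / α))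
        = ((θ * PY y) ^ (α - 1) * μy y) ^ (1 / α) := by
          have he : (α - 1) * (1 / α) = 1 - 1 / α := by field_simp
          rw [mul_rpow (rpow_nonneg hθPY _) (hμy y).1, ← rpow_mul hθPY, he,
            mul_rpow hθ.le (sum_nonneg fun x _ => hP x y), mul_assoc]
      _ ≤ (∑ x, Q x y ^ α) ^ (1 / α) := by
          gcongr
          exact mul_nonneg (rpow_nonneg hθPY _) (hμy y).1
  have hPY1 : ∑ y, PY y = 1 := by rw [← hP1, sum_comm]
  have hjensen := rpow_sum_le_sum_rpow_mul_rpow (fun y => (hμy y).1) (fun y => (hμy y).2) hPY1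
    (one_le_one_div hα0 hα1.le)
  have hlower : θ ^ (1 - 1 / α) * μ ^ (1 / α) ≤ condRenyiSum α Q :=
    calc θ ^ (1 - 1 / α) * μ ^ (1 / α) ≤ θ ^ (1 - 1 / α) * (∑ y, μy y) ^ (1 / α) := by gcongr
      _ ≤ θ ^ (1 - 1 / α) * ∑ y, PY y ^ (1 - 1 / α) * μy y ^ (1 / α) :=
          mul_le_mul_of_nonneg_left hjensen (rpow_nonneg hθ.le _)
      _ ≤ condRenyiSum α Q := by rw [mul_sum]; exact sum_le_sum fun y _ => hfiber y
  calc -log θ + log μ / (1 - α) = α / (1 - α) * log (θ ^ (1 - 1 / α) * μ ^ (1 / α)) := by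
        rw [log_mul (rpow_pos_of_pos hθ _).ne' (rpow_pos_of_pos hμ _).ne', log_rpow hθ,
          log_rpow hμ]
        have : 1 - α ≠ 0 := by linarith
        field_simp
        ring
    _ ≤ α / (1 - α) * log (condRenyiSum α Q) := by gcongr

end SmoothRenyiBounds

section IID

variable {X Y : Type}

noncomputable def iidPow (p : X → Y → ℝ) (n : ℕ) (x : Fin n → X) (y : Fin n → Y) : ℝ :=
  ∏ t, p (x t) (y t)

lemma iidPow_nonneg {p : X → Y → ℝ} (hp : ∀ x y, 0 ≤ p x y) {n : ℕ} (x : Fin n → X)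
    (y : Fin n → Y) : 0 ≤ iidPow p n x y :=
  prod_nonneg fun _ _ => hp _ _

variable [Fintype X] {p : X → Y → ℝ} {n : ℕ}

lemma prod_condProb_eq_exp (hp : ∀ x y, 0 ≤ p x y) {x : Fin n → X} {y : Fin n → Y}
    (hpos : 0 < iidPow p n x y) :
    ∏ t, condProb p (x t) (y t) = exp (∑ t, log (condProb p (x t) (y t))) := by
  rw [exp_sum]
  refine prod_congr rfl fun t _ => (exp_log ?_).symm
  have hpt : 0 < p (x t) (y t) :=
    (hp _ _).lt_of_ne' ((prod_ne_zero_iff.1 hpos.ne') t (mem_univ t))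
  exact div_pos hpt (hpt.trans_le (single_le_sum (fun x' _ => hp x' (y t)) (mem_univ (x t))))

lemma sum_prod_condProb_le_one (hp : ∀ x y, 0 ≤ p x y) (y : Fin n → Y) :
    ∑ x : Fin n → X, ∏ t, condProb p (x t) (y t) ≤ 1 := by
  rw [← Fintype.prod_sum fun t x => condProb p x (y t)]
  exact prod_le_one (fun t _ => sum_nonneg fun x _ => condProb_nonneg hp x (y t))
    fun t _ => sum_condProb_le_one p (y t)

open Classical in
lemma card_filter_le_prod_condProb_le (hp : ∀ x y, 0 ≤ p x y) {β : ℝ} (hβ : 0 < β)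
    (y : Fin n → Y) : (#{x : Fin n → X | β ≤ ∏ t, condProb p (x t) (y t)} : ℝ) ≤ β⁻¹ :=
  card_filter_le_inv _ (fun _ _ => prod_nonneg fun _ _ => condProb_nonneg hp _ _)
    (sum_prod_condProb_le_one hp y) hβ

variable [Fintype Y]

lemma sum_sum_prod_eq_prod_sum_sum (F : Fin n → X → Y → ℝ) :
    ∑ x : Fin n → X, ∑ y : Fin n → Y, ∏ t, F t (x t) (y t) = ∏ t, ∑ x, ∑ y, F t x y := by
  simp_rw [← Fintype.sum_prod_type', Fintype.prod_sum]
  exact Fintype.sum_equiv (Equiv.arrowProdEquivProdArrow (Fin n) (fun _ => X) (fun _ => Y)).symm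
    _ _ fun _ => rfl

lemma sum_sum_iidPow (hp1 : ∑ x, ∑ y, p x y = 1) :
    ∑ x : Fin n → X, ∑ y : Fin n → Y, iidPow p n x y = 1 := by
  simp [iidPow, sum_sum_prod_eq_prod_sum_sum fun _ => p, hp1]

lemma sum_sum_iidPow_mul_mul (hp1 : ∑ x, ∑ y, p x y = 1) {G : X → Y → ℝ}
    (hG : ∑ x, ∑ y, p x y * G x y = 0) (t s : Fin n) :
    ∑ x : Fin n → X, ∑ y : Fin n → Y, iidPow p n x y * (G (x t) (y t) * G (x s) (y s)) =
      if t = s then ∑ x, ∑ y, p x y * G x y ^ 2 else 0 := by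
  set F : Fin n → X → Y → ℝ := fun r u v =>
    p u v * (if r = t then G u v else 1) * (if r = s then G u v else 1)
  have hF : ∀ x y, iidPow p n x y * (G (x t) (y t) * G (x s) (y s)) = ∏ r, F r (x r) (y r) :=
    fun x y => by simp only [F, iidPow, prod_mul_distrib, prod_ite_eq', mem_univ, if_true]; ring
  simp only [hF, sum_sum_prod_eq_prod_sum_sum]
  split_ifs with hts
  · subst hts
    rw [prod_eq_single t (fun r _ hr => by simp [F, hr, hp1]) (by simp)]
    simp [F, sq, mul_assoc]
  · exact prod_eq_zero (mem_univ t) (by simp [F, hts, hG])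

lemma sum_sum_iidPow_mul_sq (hp1 : ∑ x, ∑ y, p x y = 1) {G : X → Y → ℝ}
    (hG : ∑ x, ∑ y, p x y * G x y = 0) :
    ∑ x : Fin n → X, ∑ y : Fin n → Y, iidPow p n x y * (∑ t, G (x t) (y t)) ^ 2 =
      n * ∑ x, ∑ y, p x y * G x y ^ 2 := by
  have hexpand : ∀ x y, iidPow p n x y * (∑ t, G (x t) (y t)) ^ 2 =
      ∑ t, ∑ s, iidPow p n x y * (G (x t) (y t) * G (x s) (y s)) := fun x y => by
    rw [sq, sum_mul_sum, mul_sum]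
    simp only [mul_sum]
  have hswap : ∀ k : (Fin n → X) → (Fin n → Y) → Fin n → ℝ,
      ∑ x, ∑ y, ∑ t, k x y t = ∑ t, ∑ x, ∑ y, k x y t := fun k =>
    (sum_congr rfl fun x _ => sum_comm).trans sum_comm
  simp only [hexpand, hswap, sum_sum_iidPow_mul_mul hp1 hG, sum_ite_eq, mem_univ, if_true,
    sum_const, card_univ, Fintype.card_fin, nsmul_eq_mul]

lemma condShannon_eq_sum (p : X → Y → ℝ) :
    condShannon p = ∑ x, ∑ y, p x y * -log (condProb p x y) := by
  rw [condShannon, sum_comm]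
  simp only [condProb, ← log_inv, inv_div]

variable (p n) in
def IsTypical (γ : ℝ) (x : Fin n → X) (y : Fin n → Y) : Prop :=
  exp (-(n * (condShannon p + γ))) ≤ ∏ t, condProb p (x t) (y t) ∧
    ∏ t, condProb p (x t) (y t) ≤ exp (-(n * (condShannon p - γ)))

/-- Chebyshev's inequality for the information density `-log (condProb p x y)`. -/
lemma massOn_iidPow_not_isTypical_le (hp : ∀ x y, 0 ≤ p x y) (hp1 : ∑ x, ∑ y, p x y = 1)
    {γ : ℝ} (hγ : 0 < γ) (hn : 0 < n) :
    massOn (iidPow p n) (fun x y => ¬ IsTypical p n γ x y) ≤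
      (∑ x, ∑ y, p x y * (-log (condProb p x y) - condShannon p) ^ 2) / (n * γ ^ 2) := by
  set G : X → Y → ℝ := fun x y => -log (condProb p x y) - condShannon p
  have hG : ∑ x, ∑ y, p x y * G x y = 0 := by
    simp only [G, mul_sub, sum_sub_distrib, ← sum_mul, hp1, ← condShannon_eq_sum, one_mul,
      sub_self]
  have hnγ : 0 < ((n : ℝ) * γ) ^ 2 := by positivity
  refine (massOn_le_sum_mul_div (iidPow_nonneg hp) (fun x y => sq_nonneg (∑ t, G (x t) (y t)))
    hnγ fun x y hpos hx => ?_).trans_eq ?_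
  · by_contra hlt
    have habs := abs_lt_of_sq_lt_sq' (lt_of_not_ge hlt) (by positivity)
    have hsum : ∑ t, log (condProb p (x t) (y t)) = -(n * condShannon p) - ∑ t, G (x t) (y t) := by
      simp [G, sum_sub_distrib]
      ring
    apply hx
    rw [IsTypical, prod_condProb_eq_exp hp hpos, hsum, exp_le_exp, exp_le_exp]
    constructor <;> linarith [habs.1, habs.2]
  · rw [sum_sum_iidPow_mul_sq hp1 hG]
    field_simp
    rfl

lemma tendsto_massOn_iidPow_isTypical (hp : ∀ x y, 0 ≤ p x y) (hp1 : ∑ x, ∑ y, p x y = 1)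
    {γ : ℝ} (hγ : 0 < γ) :
    Tendsto (fun n => massOn (iidPow p n) (IsTypical p n γ)) atTop (nhds 1) := by
  set V := ∑ x, ∑ y, p x y * (-log (condProb p x y) - condShannon p) ^ 2
  have hlower : Tendsto (fun n : ℕ => 1 - V / γ ^ 2 / n) atTop (nhds 1) := by
    simpa using tendsto_const_nhds.sub (tendsto_const_div_atTop_nhds_zero_nat (V / γ ^ 2))
  refine tendsto_of_tendsto_of_tendsto_of_le_of_le' hlower tendsto_const_nhds ?_ ?_
  · filter_upwards [eventually_gt_atTop 0] with n hn
    have h := massOn_add_massOn_not (iidPow p n) (IsTypical p n γ)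
    rw [sum_sum_iidPow hp1] at h
    have := massOn_iidPow_not_isTypical_le hp hp1 hγ hn
    rw [div_div, mul_comm (γ ^ 2)]
    linarith
  · refine Eventually.of_forall fun n => ?_
    have h := massOn_add_massOn_not (iidPow p n) (IsTypical p n γ)
    rw [sum_sum_iidPow hp1] at h
    linarith [massOn_nonneg (iidPow_nonneg hp (n := n)) fun x y => ¬ IsTypical p n γ x y]

lemma massOn_iidPow_and_prod_condProb_le (hp : ∀ x y, 0 ≤ p x y) (hp1 : ∑ x, ∑ y, p x y = 1)
    {E : (Fin n → X) → (Fin n → Y) → Prop} [∀ x y, Decidable (E x y)] {N β : ℝ} (hβ : 0 ≤ β)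
    (hE : ∀ y, (#{x | E x y} : ℝ) ≤ N) :
    massOn (iidPow p n) (fun x y => E x y ∧ ∏ t, condProb p (x t) (y t) ≤ β) ≤ N * β := by
  set PY : (Fin n → Y) → ℝ := fun y => ∏ t, ∑ x', p x' (y t)
  have hPY0 : ∀ y, 0 ≤ PY y := fun y => prod_nonneg fun t _ => sum_nonneg fun x _ => hp x _
  have hPY1 : ∑ y, PY y = 1 := by
    rw [← Fintype.prod_sum fun _ y => ∑ x', p x' y, sum_comm, hp1, prod_const_one]
  have hfactor : ∀ x y, iidPow p n x y = (∏ t, condProb p (x t) (y t)) * PY y := fun x y => by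
    rw [← prod_mul_distrib]; exact prod_congr rfl fun t _ => (condProb_mul_sum hp _ _).symm
  calc massOn (iidPow p n) (fun x y => E x y ∧ ∏ t, condProb p (x t) (y t) ≤ β)
      ≤ ∑ x, ∑ y, if E x y then β * PY y else 0 := by
        refine sum_le_sum fun x _ => sum_le_sum fun y _ => ?_
        by_cases h : E x y ∧ ∏ t, condProb p (x t) (y t) ≤ β
        · rw [if_pos h, if_pos h.1, hfactor]
          exact mul_le_mul_of_nonneg_right h.2 (hPY0 y)
        · rw [if_neg h]
          split_ifs
          exacts [mul_nonneg hβ (hPY0 y), le_rfl]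
    _ = ∑ y, (#{x | E x y} : ℝ) * (β * PY y) := by
        rw [sum_comm]; simp only [← sum_filter, sum_const, nsmul_eq_mul]
    _ ≤ ∑ y, N * (β * PY y) := sum_le_sum fun y _ =>
        mul_le_mul_of_nonneg_right (hE y) (mul_nonneg hβ (hPY0 y))
    _ = N * β := by rw [← mul_sum, ← mul_sum, hPY1, mul_one]

lemma massOn_iidPow_isTypical_le (hp : ∀ x y, 0 ≤ p x y) (hp1 : ∑ x, ∑ y, p x y = 1)
    {P : (Fin n → X) → (Fin n → Y) → ℝ} (hP : ∀ x y, 0 ≤ P x y) (γ : ℝ) {θ : ℝ} (hθ : 0 < θ) :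
    massOn (iidPow p n) (IsTypical p n γ) ≤ massOn (iidPow p n) (fun x y => condProb P x y ≤ θ) +
      θ⁻¹ * exp (-(n * (condShannon p - γ))) := by
  have hfiber : ∀ y, (#{x | θ < condProb P x y} : ℝ) ≤ θ⁻¹ := fun y =>
    (Nat.cast_le.2 (card_le_card (monotone_filter_right _ fun _ _ => le_of_lt))).trans
      (card_filter_le_inv _ (fun x _ => condProb_nonneg hP x y) (sum_condProb_le_one P y) hθ)
  refine (massOn_le_add (iidPow_nonneg hp) (C₂ := fun x y => θ < condProb P x y ∧
    ∏ t, condProb p (x t) (y t) ≤ exp (-(n * (condShannon p - γ)))) fun x y hxy =>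
      (le_or_gt (condProb P x y) θ).imp id fun hlt => ⟨hlt, hxy.2⟩).trans ?_
  exact add_le_add_right (massOn_iidPow_and_prod_condProb_le hp hp1 (exp_pos _).le hfiber) _

end IID

section Mixture

variable {X Y : Type} {ι : Type*} [Fintype ι]

noncomputable def mixturePow (a : ι → ℝ) (Pc : ι → X → Y → ℝ) (n : ℕ) (x : Fin n → X)
    (y : Fin n → Y) : ℝ :=
  ∑ k, a k * iidPow (Pc k) n x y

variable {a : ι → ℝ} {Pc : ι → X → Y → ℝ} {n : ℕ}

lemma mixturePow_nonneg (ha : ∀ k, 0 ≤ a k) (hPc : ∀ k x y, 0 ≤ Pc k x y) (x : Fin n → X)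
    (y : Fin n → Y) : 0 ≤ mixturePow a Pc n x y :=
  sum_nonneg fun k _ => mul_nonneg (ha k) (iidPow_nonneg (hPc k) x y)

variable [Fintype X]

lemma card_filter_exists_le_prod_condProb_le (hPc : ∀ k x y, 0 ≤ Pc k x y) {β : ℝ} (hβ : 0 < β)
    (y : Fin n → Y) :
    (#{x : Fin n → X | ∃ k, β ≤ ∏ t, condProb (Pc k) (x t) (y t)} : ℝ) ≤ Fintype.card ι * β⁻¹ := by
  classical
  calc (#{x : Fin n → X | ∃ k, β ≤ ∏ t, condProb (Pc k) (x t) (y t)} : ℝ)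
      ≤ #(univ.biUnion fun k => {x : Fin n → X | β ≤ ∏ t, condProb (Pc k) (x t) (y t)}) :=
        Nat.cast_le.2 (card_le_card fun x hx => by simpa using hx)
    _ ≤ ∑ k, (#{x : Fin n → X | β ≤ ∏ t, condProb (Pc k) (x t) (y t)} : ℝ) := by
        exact_mod_cast card_biUnion_le
    _ ≤ ∑ _k : ι, β⁻¹ := sum_le_sum fun k _ => card_filter_le_prod_condProb_le (hPc k) hβ y
    _ = Fintype.card ι * β⁻¹ := by simp

variable [Fintype Y]

lemma massOn_mixturePow (C : (Fin n → X) → (Fin n → Y) → Prop) :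
    massOn (mixturePow a Pc n) C = ∑ k, a k * massOn (iidPow (Pc k) n) C := by
  classical
  have hpull : ∀ x y, (if C x y then mixturePow a Pc n x y else 0) =
      ∑ k, a k * if C x y then iidPow (Pc k) n x y else 0 := fun x y => by
    split_ifs <;> simp [mixturePow]
  simp only [massOn, hpull, mul_sum]
  exact (sum_congr rfl fun x _ => sum_comm).trans sum_comm

lemma sum_sum_mixturePow (hsum : ∑ k, a k = 1) (hPc1 : ∀ k, ∑ x, ∑ y, Pc k x y = 1) :
    ∑ x : Fin n → X, ∑ y : Fin n → Y, mixturePow a Pc n x y = 1 := by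
  simpa [massOn, sum_sum_iidPow (hPc1 _), hsum] using massOn_mixturePow (a := a) (Pc := Pc)
    (n := n) fun _ _ => True

lemma sum_mul_massOn_le_massOn_mixturePow (ha : ∀ k, 0 ≤ a k) (hPc : ∀ k x y, 0 ≤ Pc k x y)
    (s : Finset ι) (C : (Fin n → X) → (Fin n → Y) → Prop) :
    ∑ k ∈ s, a k * massOn (iidPow (Pc k) n) C ≤ massOn (mixturePow a Pc n) C := by
  rw [massOn_mixturePow]
  exact sum_le_sum_of_subset_of_nonneg (subset_univ s) fun k _ _ =>
    mul_nonneg (ha k) (massOn_nonneg (iidPow_nonneg (hPc k)) C)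

lemma sum_filter_le_eq_sum_filter_lt_add [LinearOrder ι] (a : ι → ℝ) (i : ι) :
    ∑ j with j ≤ i, a j = ∑ j with j < i, a j + a i := by
  have : univ.filter (· ≤ i) = insert i (univ.filter (· < i)) := by
    ext j; simp [le_iff_lt_or_eq, or_comm]
  rw [this, sum_insert (by simp), add_comm]

variable [LinearOrder ι] {α : ℝ}

theorem eventually_condSmoothRenyiF_mixturePow_le (ha : ∀ k, 0 ≤ a k) (hsum : ∑ k, a k = 1)
    (hPc0 : ∀ k x y, 0 ≤ Pc k x y) (hPc1 : ∀ k, ∑ x, ∑ y, Pc k x y = 1)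
    (hH : Antitone fun k => condShannon (Pc k)) (hα : α ∈ Set.Ioo (0 : ℝ) 1) {i : ι} {ε : ℝ}
    (hlo : ∑ j with j < i, a j < ε) (hε : ε < 1) {γ : ℝ} (hγ : 0 < γ) :
    ∀ᶠ n : ℕ in atTop, condSmoothRenyiF (mixturePow a Pc n) α ε ≤
      n * (condShannon (Pc i) + γ) + log (Fintype.card ι) := by
  set H := condShannon (Pc i)
  have hlim : Tendsto (fun n => ∑ k with ¬ k < i,
      a k * massOn (iidPow (Pc k) n) (IsTypical (Pc k) n γ)) atTop
      (nhds (1 - ∑ j with j < i, a j)) := by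
    rw [← hsum, ← sum_filter_add_sum_filter_not univ (· < i), add_sub_cancel_left]
    refine tendsto_finsetSum _ fun k _ => ?_
    simpa using (tendsto_massOn_iidPow_isTypical (hPc0 k) (hPc1 k) hγ).const_mul (a k)
  have hgap : 1 - ε < 1 - ∑ j with j < i, a j := by linarith
  filter_upwards [hlim.eventually (lt_mem_nhds hgap)] with n hn
  set S : (Fin n → X) → (Fin n → Y) → Prop :=
    fun x y => ∃ k, exp (-(n * (H + γ))) ≤ ∏ t, condProb (Pc k) (x t) (y t)
  have hS : 1 - ε ≤ massOn (mixturePow a Pc n) S := by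
    refine hn.le.trans ((sum_le_sum fun k hk => mul_le_mul_of_nonneg_left
      (massOn_mono (iidPow_nonneg (hPc0 k)) fun x y hxy => ⟨k, le_trans ?_ hxy.1⟩) (ha k)).trans
      (sum_mul_massOn_le_massOn_mixturePow ha hPc0 _ S))
    have hk : condShannon (Pc k) ≤ H := hH (not_lt.1 (mem_filter.1 hk).2)
    exact exp_le_exp.2 (by nlinarith [(n.cast_nonneg : (0 : ℝ) ≤ n)])
  have hcard : ∀ y, (#{x | S x y} : ℝ) ≤ Fintype.card ι * exp (n * (H + γ)) := fun y =>
    (card_filter_exists_le_prod_condProb_le hPc0 (exp_pos _) y).trans_eq (by rw [exp_neg, inv_inv])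
  have hι : (0 : ℝ) < Fintype.card ι := Nat.cast_pos.2 (Fintype.card_pos_iff.2 ⟨i⟩)
  calc condSmoothRenyiF (mixturePow a Pc n) α ε ≤ log (Fintype.card ι * exp (n * (H + γ))) :=
        condSmoothRenyiF_le_log hα hε (mixturePow_nonneg ha hPc0)
          (sum_sum_mixturePow hsum hPc1).le hS (mul_pos hι (exp_pos _)) hcard
    _ = n * (H + γ) + log (Fintype.card ι) := by
        rw [log_mul hι.ne' (exp_pos _).ne', log_exp, add_comm]

theorem eventually_le_condSmoothRenyiF_mixturePow (ha : ∀ k, 0 ≤ a k) (hsum : ∑ k, a k = 1)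
    (hPc0 : ∀ k x y, 0 ≤ Pc k x y) (hPc1 : ∀ k, ∑ x, ∑ y, Pc k x y = 1)
    (hH : Antitone fun k => condShannon (Pc k)) (hα : α ∈ Set.Ioo (0 : ℝ) 1) {i : ι} {ε : ℝ}
    (hε : 0 ≤ ε) (hhi : ε < ∑ j with j < i, a j + a i) {γ : ℝ} (hγ : 0 < γ) :
    ∀ᶠ n : ℕ in atTop, n * (condShannon (Pc i) - γ) +
      log ((∑ j with j < i, a j + a i - ε) / 2) / (1 - α) ≤
        condSmoothRenyiF (mixturePow a Pc n) α ε := by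
  set H := condShannon (Pc i)
  set μ := (∑ j with j < i, a j + a i - ε) / 2
  have hμ : 0 < μ := by simp only [μ]; linarith
  have hdecay : Tendsto (fun n : ℕ => exp (-(γ / 2)) ^ n) atTop (nhds 0) :=
    tendsto_pow_atTop_nhds_zero_of_lt_one (exp_pos _).le (exp_lt_one_iff.2 (by linarith))
  have hlim : Tendsto (fun n => ∑ k with k ≤ i, a k *
      (massOn (iidPow (Pc k) n) (IsTypical (Pc k) n (γ / 2)) - exp (-(γ / 2)) ^ n)) atTop
      (nhds (∑ j with j < i, a j + a i)) := by
    rw [← sum_filter_le_eq_sum_filter_lt_add]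
    refine tendsto_finsetSum _ fun k _ => ?_
    simpa using ((tendsto_massOn_iidPow_isTypical (hPc0 k) (hPc1 k) (half_pos hγ)).sub
      hdecay).const_mul (a k)
  have hgap : ε + μ < ∑ j with j < i, a j + a i := by simp only [μ]; linarith
  filter_upwards [hlim.eventually (lt_mem_nhds hgap)] with n hn
  set P := mixturePow a Pc n
  set θ := exp (-(n * (H - γ)))
  have hD : ε + μ ≤ massOn P fun x y => condProb P x y ≤ θ := by
    refine hn.le.trans ((sum_le_sum fun k hk => mul_le_mul_of_nonneg_left ?_ (ha k)).trans
      (sum_mul_massOn_le_massOn_mixturePow ha hPc0 _ _))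
    have htyp := massOn_iidPow_isTypical_le (hPc0 k) (hPc1 k)
      (mixturePow_nonneg (n := n) ha hPc0) (γ / 2) (exp_pos (-(n * (H - γ))))
    have hk : H ≤ condShannon (Pc k) := hH (mem_filter.1 hk).2
    have hrate : θ⁻¹ * exp (-(n * (condShannon (Pc k) - γ / 2))) ≤ exp (-(γ / 2)) ^ n := by
      rw [← exp_neg, ← exp_add, ← exp_nat_mul, exp_le_exp]
      nlinarith [(n.cast_nonneg : (0 : ℝ) ≤ n)]
    linarith
  have h := le_condSmoothRenyiF_of_massOn hα hε (mixturePow_nonneg ha hPc0)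
    (sum_sum_mixturePow hsum hPc1) (exp_pos _) hμ hD
  rwa [log_exp, neg_neg] at h

theorem tendsto_condSmoothRenyiF_mixturePow (ha : ∀ k, 0 ≤ a k) (hsum : ∑ k, a k = 1)
    (hPc0 : ∀ k x y, 0 ≤ Pc k x y) (hPc1 : ∀ k, ∑ x, ∑ y, Pc k x y = 1)
    (hH : Antitone fun k => condShannon (Pc k)) (hα : α ∈ Set.Ioo (0 : ℝ) 1) {i : ι} {ε : ℝ}
    (hlo : ∑ j with j < i, a j < ε) (hhi : ε < ∑ j with j < i, a j + a i) :
    Tendsto (fun n : ℕ => 1 / (n : ℝ) * condSmoothRenyiF (mixturePow a Pc n) α ε) atTop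
      (nhds (condShannon (Pc i))) := by
  have hε0 : 0 ≤ ε := (sum_nonneg fun j _ => ha j).trans hlo.le
  have hε1 : ε < 1 := by
    rw [← sum_filter_le_eq_sum_filter_lt_add] at hhi
    exact hhi.trans_le (hsum ▸ sum_le_sum_of_subset_of_nonneg (filter_subset _ _) fun j _ _ => ha j)
  exact tendsto_inv_mul_of_bounds
    (fun γ hγ => ⟨_, eventually_condSmoothRenyiF_mixturePow_le ha hsum hPc0 hPc1 hH hα hlo hε1 hγ⟩)
    (fun γ hγ => ⟨_, eventually_le_condSmoothRenyiF_mixturePow ha hsum hPc0 hPc1 hH hα hε0 hhi hγ⟩)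

end Mixture

theorem mixture_smooth_renyi_general {X Y : Type} [Fintype X] [Fintype Y]
    (m : ℕ) (a : Fin m → ℝ) (ha : ∀ i, 0 < a i) (hsum : ∑ i, a i = 1)
    (Pc : Fin m → X → Y → ℝ) (hPc0 : ∀ i x y, 0 ≤ Pc i x y)
    (hPc1 : ∀ i, ∑ x, ∑ y, Pc i x y = 1)
    (hdec : ∀ i j : Fin m, i < j → condShannon (Pc j) < condShannon (Pc i))
    (α : ℝ) (hα : α ∈ Set.Ioo (0:ℝ) 1) (i : Fin m) (ε : ℝ)
    (hεlo : ∑ j ∈ Finset.univ.filter (· < i), a j ≤ ε)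
    (hεhi : ε < ∑ j ∈ Finset.univ.filter (· < i), a j + a i) :
    Tendsto (fun δ : ℝ =>
        limsup (fun n : ℕ => (1 / (n : ℝ)) *
          condSmoothRenyiF
            (fun (x : Fin n → X) (y : Fin n → Y) =>
              ∑ k, a k * ∏ t, Pc k (x t) (y t)) α (ε + δ)) atTop)
      (nhdsWithin 0 (Set.Ioi 0)) (nhds (condShannon (Pc i))) := by
  have hH : Antitone fun k => condShannon (Pc k) := StrictAnti.antitone fun j k h => hdec j k h
  have hrate : ∀ δ ∈ Set.Ioo 0 (∑ j ∈ Finset.univ.filter (· < i), a j + a i - ε),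
      limsup (fun n : ℕ => 1 / (n : ℝ) * condSmoothRenyiF (mixturePow a Pc n) α (ε + δ)) atTop =
        condShannon (Pc i) := fun δ hδ =>
    (tendsto_condSmoothRenyiF_mixturePow (fun k => (ha k).le) hsum hPc0 hPc1 hH hα
      (by linarith [hδ.1]) (by linarith [hδ.2])).limsup_eq
  exact tendsto_const_nhds.congr'
    (eventuallyEq_of_mem (Ioo_mem_nhdsGT (by linarith)) fun δ hδ => (hrate δ hδ).symm)

/-- Theorem 2: for a mixture of `m` i.i.d. sources with strictly decreasing
conditional entropies and `ε ∈ [A_i, A_{i+1})`, the asymptotic conditional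
ε-smooth Rényi entropy rate equals `H(X_i|Y_i)`. -/
theorem mixture_smooth_renyi {X Y : Type} [Fintype X] [Fintype Y]
    (m : ℕ) (hm : 0 < m) (a : Fin m → ℝ) (ha : ∀ i, 0 < a i) (hsum : ∑ i, a i = 1)
    (Pc : Fin m → X → Y → ℝ) (hPc0 : ∀ i x y, 0 ≤ Pc i x y)
    (hPc1 : ∀ i, ∑ x, ∑ y, Pc i x y = 1)
    (hdec : ∀ i j : Fin m, i < j → condShannon (Pc j) < condShannon (Pc i))
    (α : ℝ) (hα : α ∈ Set.Ioo (0:ℝ) 1) (i : Fin m) (ε : ℝ)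
    (hεlo : ∑ j ∈ Finset.univ.filter (· < i), a j ≤ ε)
    (hεhi : ε < ∑ j ∈ Finset.univ.filter (· < i), a j + a i) :
    Tendsto (fun δ : ℝ =>
        limsup (fun n : ℕ => (1 / (n : ℝ)) *
          condSmoothRenyiF
            (fun (x : Fin n → X) (y : Fin n → Y) =>
              ∑ k, a k * ∏ t, Pc k (x t) (y t)) α (ε + δ)) atTop)
      (nhdsWithin 0 (Set.Ioi 0)) (nhds (condShannon (Pc i))) :=
  mixture_smooth_renyi_general m a ha hsum Pc hPc0 hPc1 hdec α hα i ε hεlo hεhi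
end
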